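/- Let A ∈ ℝ^{n×n}, let k be an odd natural number, and define G : ℝⁿ → ℝⁿ by G(x) = (Ax)^{[k]}. If A is a Q-matrix (i.e., SOL(A,q) ≠ ∅ for every q ∈ ℝⁿ), then SOL(G,q) ≠ ∅ for every q ∈ ℝⁿ. -/

import Mathlib

open Finset

/-- The solution set of the (nonlinear/polynomial) complementarity problem for the map `g`
and vector `q`: all `x ≥ 0` with `g x + q ≥ 0` and `⟨x, g x + q⟩ = 0`. -/
def SOL {n : ℕ} (g : (Fin n → ℝ) → (Fin n → ℝ)) (q : Fin n → ℝ) : Set (Fin n → ℝ) :=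
  {x | (∀ i, 0 ≤ x i) ∧ (∀ i, 0 ≤ g x i + q i) ∧ ∑ i, x i * (g x i + q i) = 0}

/-- `F` is a polynomial map each of whose components is homogeneous of degree `d`. -/
def IsHomogPolyMap {n : ℕ} (F : (Fin n → ℝ) → (Fin n → ℝ)) (d : ℕ) : Prop :=
  ∃ P : Fin n → MvPolynomial (Fin n) ℝ,
    (∀ x i, F x i = MvPolynomial.eval x (P i)) ∧ ∀ i, (P i).IsHomogeneous d

/-- `p` is a polynomial map each of whose components has total degree `< d`. -/
def IsPolyMapDegLT {n : ℕ} (p : (Fin n → ℝ) → (Fin n → ℝ)) (d : ℕ) : Prop :=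
  ∃ P : Fin n → MvPolynomial (Fin n) ℝ,
    (∀ x i, p x i = MvPolynomial.eval x (P i)) ∧ ∀ i, (P i).totalDegree < d

/-!
The odd power `t ↦ t ^ k` is an increasing bijection of `ℝ` commuting with negation. Such a map
preserves the sign of `a + b` when applied to `a` and inverted on `b`, so the componentwise
complementarity conditions for `(Ax)^[k] + q` are exactly those for `Ax + q^[1/k]`:
`SOL(G, q) = SOL(A, q^[1/k])`, which is nonempty because `A` is a Q-matrix.
-/

namespace OrderIso

variable {α : Type*} [AddGroup α] [LE α] (e : α ≃o α)

theorem symm_map_neg (he : ∀ t, e (-t) = -e t) (t : α) : e.symm (-t) = -e.symm t :=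
  e.injective <| by rw [he, apply_symm_apply, apply_symm_apply]

theorem add_nonneg_iff_of_map_neg [AddRightMono α] (he : ∀ t, e (-t) = -e t) (a b : α) :
    0 ≤ e a + b ↔ 0 ≤ a + e.symm b := by
  rw [← neg_le_iff_add_nonneg, ← neg_le_iff_add_nonneg, ← symm_map_neg e he, symm_apply_le]

theorem add_eq_zero_iff_of_map_neg (he : ∀ t, e (-t) = -e t) (a b : α) :
    e a + b = 0 ↔ a + e.symm b = 0 := by
  rw [← eq_neg_iff_add_eq_zero, ← eq_neg_iff_add_eq_zero, ← symm_map_neg e he, eq_symm_apply]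

end OrderIso

theorem mem_SOL_iff {n : ℕ} {g : (Fin n → ℝ) → (Fin n → ℝ)} {q x : Fin n → ℝ} :
    x ∈ SOL g q ↔ ∀ i, 0 ≤ x i ∧ 0 ≤ g x i + q i ∧ x i * (g x i + q i) = 0 := by
  constructor
  · rintro ⟨hx, hg, hsum⟩ i
    have hterms := (sum_eq_zero_iff_of_nonneg fun j _ => mul_nonneg (hx j) (hg j)).1 hsum
    exact ⟨hx i, hg i, hterms i (mem_univ i)⟩
  · intro h
    exact ⟨fun i => (h i).1, fun i => (h i).2.1, sum_eq_zero fun i _ => (h i).2.2⟩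

theorem SOL_comp_orderIso {n : ℕ} (e : ℝ ≃o ℝ) (he : ∀ t, e (-t) = -e t)
    (g : (Fin n → ℝ) → (Fin n → ℝ)) (q : Fin n → ℝ) :
    SOL (fun x i => e (g x i)) q = SOL g (fun i => e.symm (q i)) := by
  ext x
  simp only [mem_SOL_iff, mul_eq_zero, e.add_nonneg_iff_of_map_neg he,
    e.add_eq_zero_iff_of_map_neg he]

theorem Real.pow_left_surjective_of_odd {k : ℕ} (hk : Odd k) :
    Function.Surjective fun t : ℝ => t ^ k := by
  intro t
  rcases le_total 0 t with ht | ht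
  · exact ⟨t ^ (k⁻¹ : ℝ), Real.rpow_inv_natCast_pow ht hk.pos.ne'⟩
  · refine ⟨-(-t) ^ (k⁻¹ : ℝ), ?_⟩
    dsimp only
    rw [hk.neg_pow, Real.rpow_inv_natCast_pow (neg_nonneg.2 ht) hk.pos.ne', neg_neg]

noncomputable def Real.oddPowOrderIso {k : ℕ} (hk : Odd k) : ℝ ≃o ℝ :=
  hk.strictMono_pow.orderIsoOfSurjective _ (Real.pow_left_surjective_of_odd hk)

theorem stmt_8 {n k : ℕ} (hk : Odd k) (A : Matrix (Fin n) (Fin n) ℝ)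
    (hQ : ∀ q : Fin n → ℝ, (SOL (fun x => A.mulVec x) q).Nonempty) :
    ∀ q : Fin n → ℝ, (SOL (fun x i => A.mulVec x i ^ k) q).Nonempty := by
  intro q
  obtain ⟨x, hx⟩ := hQ fun i => (Real.oddPowOrderIso hk).symm (q i)
  exact ⟨x, SOL_comp_orderIso (Real.oddPowOrderIso hk) hk.neg_pow (fun x => A.mulVec x) q ▸ hx⟩
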